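/- Assume the Gramian satisfies Λ ≥ λ I for some λ > 0, let φ̃⁰ solve Λ φ̃⁰ = x¹ − e^{TA} x⁰, and set û(t) = Bᵀ e^{(T−t)Aᵀ} φ̃⁰. Then the minimal-norm control satisfies the bound ∫₀^T |û(t)|² dt = ⟨Λ φ̃⁰, φ̃⁰⟩ ≤ λ^{−1} |x¹ − e^{TA} x⁰|²; i.e. the L² norm of the control is bounded, up to the factor λ^{−1/2}, by the norm of the data x¹ − e^{TA} x⁰. -/

import Mathlib

/-!
Evaluating the quadratic form `X ↦ ⟨X φ, φ⟩` under the Gramian integral turns `⟨Λ φ, φ⟩` into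
`∫₀ᵀ |Bᵀ e^{(T-t)Aᵀ} φ|² dt`, which is the energy identity. For the bound, put `y = Λ φ̃⁰`:
coercivity gives `λ |φ̃⁰|² ≤ ⟨y, φ̃⁰⟩`, and expanding `0 ≤ |y - λ φ̃⁰|²` then yields
`λ ⟨y, φ̃⁰⟩ ≤ |y|²`.
-/

open Matrix MeasureTheory

attribute [local instance] Matrix.normedAddCommGroup Matrix.normedSpace

namespace Matrix

@[fun_prop]
theorem continuous_exp {m 𝔸 : Type*} [Fintype m] [DecidableEq m] [NormedRing 𝔸]
    [NormedAlgebra ℚ 𝔸] [CompleteSpace 𝔸] :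
    Continuous (NormedSpace.exp : Matrix m m 𝔸 → Matrix m m 𝔸) := by
  -- `exp` does not see the norm; the `L∞` operator norm is submultiplicative and induces the
  -- product topology.
  open scoped Norms.Operator in
  exact @NormedSpace.exp_continuous _ _ _ (inferInstanceAs (CompleteSpace (m → m → 𝔸)))

theorem transpose_mulVec_dotProduct_self {m n R : Type*} [Fintype m] [Fintype n] [CommRing R]
    (C : Matrix m n R) (v : m → R) :
    Cᵀ *ᵥ v ⬝ᵥ Cᵀ *ᵥ v = (C * Cᵀ) *ᵥ v ⬝ᵥ v := by
  rw [← mulVec_mulVec, dotProduct_comm, dotProduct_mulVec, vecMul_transpose]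

theorem intervalIntegral_mulVec_dotProduct {m n : Type*} [Fintype m] [Fintype n]
    {f : ℝ → Matrix m n ℝ} (hf : Continuous f) (a b : ℝ) (v : n → ℝ) (w : m → ℝ) :
    (∫ t in a..b, f t) *ᵥ v ⬝ᵥ w = ∫ t in a..b, f t *ᵥ v ⬝ᵥ w := by
  let L : Matrix m n ℝ →L[ℝ] ℝ := LinearMap.toContinuousLinearMap
    { toFun := fun X => X *ᵥ v ⬝ᵥ w
      map_add' := fun X Y => by simp only [add_mulVec, add_dotProduct]
      map_smul' := fun c X => by
        simp only [smul_mulVec, smul_dotProduct, RingHom.id_apply, smul_eq_mul] }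
  exact (L.intervalIntegral_comp_comm (hf.intervalIntegrable a b)).symm

end Matrix

theorem dotProduct_le_inv_mul_of_coercive {n : Type*} [Fintype n] {c : ℝ} (hc : 0 < c)
    {y φ : n → ℝ} (h : c * (φ ⬝ᵥ φ) ≤ y ⬝ᵥ φ) : y ⬝ᵥ φ ≤ c⁻¹ * (y ⬝ᵥ y) := by
  have hsq : 0 ≤ (y - c • φ) ⬝ᵥ (y - c • φ) := dotProduct_self_star_nonneg _
  simp only [sub_dotProduct, dotProduct_sub, smul_dotProduct, dotProduct_smul, smul_eq_mul,
    dotProduct_comm φ y] at hsq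
  rw [le_inv_mul_iff₀ hc]
  linarith [mul_le_mul_of_nonneg_left h hc.le]

theorem minimal_norm_control_bound_general
    {N M : ℕ} (A : Matrix (Fin N) (Fin N) ℝ) (B : Matrix (Fin N) (Fin M) ℝ)
    (T : ℝ)
    (Λ : Matrix (Fin N) (Fin N) ℝ)
    (hΛ : Λ = ∫ t in (0:ℝ)..T,
      NormedSpace.exp ((T - t) • A) * B * Bᵀ * NormedSpace.exp ((T - t) • Aᵀ))
    (lam : ℝ) (hlam : 0 < lam)
    (hcoer : ∀ φ : Fin N → ℝ, lam * (φ ⬝ᵥ φ) ≤ Λ.mulVec φ ⬝ᵥ φ)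
    (x0 x1 φt : Fin N → ℝ)
    (hφt : Λ.mulVec φt = x1 - (NormedSpace.exp (T • A)).mulVec x0)
    (uhat : ℝ → Fin M → ℝ)
    (huhat : ∀ t : ℝ, uhat t = Bᵀ.mulVec ((NormedSpace.exp ((T - t) • Aᵀ)).mulVec φt)) :
    (∫ t in (0:ℝ)..T, uhat t ⬝ᵥ uhat t) = Λ.mulVec φt ⬝ᵥ φt ∧
    Λ.mulVec φt ⬝ᵥ φt ≤ lam⁻¹ *
      ((x1 - (NormedSpace.exp (T • A)).mulVec x0) ⬝ᵥ
        (x1 - (NormedSpace.exp (T • A)).mulVec x0)) := by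
  constructor
  · rw [hΛ, intervalIntegral_mulVec_dotProduct (by fun_prop)]
    refine intervalIntegral.integral_congr fun t _ => ?_
    rw [huhat, ← transpose_smul, exp_transpose, mulVec_mulVec, ← transpose_mul,
      transpose_mulVec_dotProduct_self, transpose_mul, ← Matrix.mul_assoc]
  · rw [hφt]
    exact dotProduct_le_inv_mul_of_coercive hlam (hφt ▸ hcoer φt)

/-- If the Gramian satisfies `Λ ≥ λ I` with `λ > 0`, `φ̃⁰` solves `Λ φ̃⁰ = x¹ − e^{TA} x⁰`
and `û(t) = Bᵀ e^{(T−t)Aᵀ} φ̃⁰`, then `∫₀^T |û|² dt = ⟨Λ φ̃⁰, φ̃⁰⟩ ≤ λ⁻¹ |x¹ − e^{TA} x⁰|²`. -/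
theorem minimal_norm_control_bound
    {N M : ℕ} (A : Matrix (Fin N) (Fin N) ℝ) (B : Matrix (Fin N) (Fin M) ℝ)
    (T : ℝ) (hT : 0 < T)
    (Λ : Matrix (Fin N) (Fin N) ℝ)
    (hΛ : Λ = ∫ t in (0:ℝ)..T,
      NormedSpace.exp ((T - t) • A) * B * Bᵀ * NormedSpace.exp ((T - t) • Aᵀ))
    (lam : ℝ) (hlam : 0 < lam)
    (hcoer : ∀ φ : Fin N → ℝ, lam * (φ ⬝ᵥ φ) ≤ Λ.mulVec φ ⬝ᵥ φ)
    (x0 x1 φt : Fin N → ℝ)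
    (hφt : Λ.mulVec φt = x1 - (NormedSpace.exp (T • A)).mulVec x0)
    (uhat : ℝ → Fin M → ℝ)
    (huhat : ∀ t : ℝ, uhat t = Bᵀ.mulVec ((NormedSpace.exp ((T - t) • Aᵀ)).mulVec φt)) :
    (∫ t in (0:ℝ)..T, uhat t ⬝ᵥ uhat t) = Λ.mulVec φt ⬝ᵥ φt ∧
    Λ.mulVec φt ⬝ᵥ φt ≤ lam⁻¹ *
      ((x1 - (NormedSpace.exp (T • A)).mulVec x0) ⬝ᵥ
        (x1 - (NormedSpace.exp (T • A)).mulVec x0)) :=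
  minimal_norm_control_bound_general A B T Λ hΛ lam hlam hcoer x0 x1 φt hφt uhat huhat
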